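/- Let H be a disjoint union of paths whose three longest paths have orders n1 ≥ n2 ≥ n3 ≥ 1. Then the longest path of K2 ∨ H has exactly n1 + n2 + n3 + 2 vertices, and K2 ∨ (P_{n1} ∪ P_{n2} ∪ P_{n3}) contains a path P_i for every i with 3 ≤ i ≤ n1 + n2 + n3 + 2. -/

import Mathlib

open SimpleGraph

/-- `G` contains a copy of `F` as a subgraph: an injective graph homomorphism. -/
def ContainsCopy {α β : Type*} (F : SimpleGraph α) (G : SimpleGraph β) : Prop :=
  ∃ f : α → β, Function.Injective f ∧ ∀ a b, F.Adj a b → G.Adj (f a) (f b)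

/-- The cone over a graph: a new apex vertex joined to every vertex of `H`.
`cone H = K1 ∨ H`, and `cone (cone H) = K2 ∨ H`. -/
def cone {β : Type*} (H : SimpleGraph β) : SimpleGraph (Option β) :=
  SimpleGraph.fromRel (fun x y =>
    x = none ∨ ∃ a b, x = some a ∧ y = some b ∧ H.Adj a b)

/-- The disjoint union of paths with orders `n 0, n 1, n 2, …`:
for each `i`, the vertices `(i, 0), …, (i, n i - 1)` form a path. -/
def pathsUnion (n : ℕ → ℕ) : SimpleGraph (ℕ × ℕ) :=
  SimpleGraph.fromRel (fun x y => x.1 = y.1 ∧ x.2 + 1 = y.2 ∧ y.2 < n x.1)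

/-- `t` pairwise vertex-disjoint copies of the path `P_l`. -/
def tPaths (t l : ℕ) : SimpleGraph (Fin t × Fin l) :=
  SimpleGraph.fromRel (fun x y => x.1 = y.1 ∧ (x.2 : ℕ) + 1 = (y.2 : ℕ))

/-- The spider (starlike tree) with `t` branches each having `m` vertices
(besides the common center). -/
def spider (t m : ℕ) : SimpleGraph (Option (Fin t × Fin m)) :=
  SimpleGraph.fromRel (fun x y =>
    (x = none ∧ ∃ p : Fin t × Fin m, y = some p ∧ (p.2 : ℕ) = 0) ∨
    (∃ p q : Fin t × Fin m, x = some p ∧ y = some q ∧ p.1 = q.1 ∧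
      (p.2 : ℕ) + 1 = (q.2 : ℕ)))

/-- `F` is a minor of `G`: branch sets realization. -/
def IsMinor {α β : Type*} (F : SimpleGraph α) (G : SimpleGraph β) : Prop :=
  ∃ B : α → G.Subgraph,
    (∀ a, (B a).verts.Nonempty) ∧
    (∀ a, (B a).Connected) ∧
    (∀ a a', a ≠ a' → Disjoint (B a).verts (B a').verts) ∧
    (∀ a a', F.Adj a a' → ∃ u ∈ (B a).verts, ∃ v ∈ (B a').verts, G.Adj u v)

/-- Planarity, via Wagner's forbidden-minor characterization. -/
def IsPlanar {β : Type*} (G : SimpleGraph β) : Prop :=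
  ¬ IsMinor (⊤ : SimpleGraph (Fin 5)) G ∧
  ¬ IsMinor (completeBipartiteGraph (Fin 3) (Fin 3)) G

/-- Outerplanarity, via the forbidden-minor characterization. -/
def IsOuterplanar {β : Type*} (G : SimpleGraph β) : Prop :=
  ¬ IsMinor (⊤ : SimpleGraph (Fin 4)) G ∧
  ¬ IsMinor (completeBipartiteGraph (Fin 2) (Fin 3)) G

/-- The spectral radius of a finite graph: the largest (adjacency) eigenvalue. -/
noncomputable def specRad {V : Type*} [Fintype V] (G : SimpleGraph V) : ℝ :=
  haveI := Classical.decRel G.Adj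
  sSup {μ : ℝ | ∃ x : V → ℝ, x ≠ 0 ∧ (G.adjMatrix ℝ).mulVec x = μ • x}

/-!
Embedding `P_{n₁}`, the first apex, `P_{n₂}`, the second apex and `P_{n₃}` one after the other
gives the long path, and shortening the three pieces gives every shorter order from `3` on.
Conversely, deleting the two apexes cuts a path of `K₂ ∨ H` into at most three runs, each lying
in one component of `H`. Runs in the same component are disjoint, so the path meets at most three
components and has at most `2 + n₁ + n₂ + n₃` vertices.
-/

open Finset

section Cone
variable {β : Type*} {H : SimpleGraph β}

@[simp] lemma cone_adj_none_left {y : Option β} : (cone H).Adj none y ↔ y ≠ none := by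
  cases y <;> simp [cone]

@[simp] lemma cone_adj_none_right {x : Option β} : (cone H).Adj x none ↔ x ≠ none := by
  rw [SimpleGraph.adj_comm, cone_adj_none_left]

@[simp] lemma cone_adj_some_some {a b : β} : (cone H).Adj (some a) (some b) ↔ H.Adj a b := by
  simp only [cone, SimpleGraph.fromRel_adj]
  constructor
  · rintro ⟨-, (h | ⟨u, v, ⟨⟩, ⟨⟩, h⟩) | (h | ⟨u, v, ⟨⟩, ⟨⟩, h⟩)⟩
    exacts [absurd h (Option.some_ne_none a), h, absurd h (Option.some_ne_none b), h.symm]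
  · exact fun h => ⟨by simpa using h.ne, Or.inl (Or.inr ⟨a, b, rfl, rfl, h⟩)⟩

lemma isChain_cone_map_some {l : List β} (h : l.IsChain H.Adj) :
    (l.map some).IsChain (cone H).Adj := by
  simpa [List.isChain_map] using h

lemma isChain_cone_append {l₁ l₂ : List β} (h₁ : l₁.IsChain H.Adj) (h₂ : l₂.IsChain H.Adj) :
    (l₁.map some ++ none :: l₂.map some).IsChain (cone H).Adj := by
  simp [List.isChain_append, List.isChain_cons, List.isChain_map, h₁, h₂]

lemma nodup_cone_append {l₁ l₂ : List β} (h : (l₁ ++ l₂).Nodup) :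
    (l₁.map some ++ none :: l₂.map some).Nodup := by
  simp_all [List.nodup_append, List.nodup_map_iff (Option.some_injective _)]

end Cone

lemma containsCopy_pathGraph_iff {V : Type*} {G : SimpleGraph V} {N : ℕ} :
    ContainsCopy (pathGraph N) G ↔ ∃ l : List V, l.length = N ∧ l.IsChain G.Adj ∧ l.Nodup := by
  constructor
  · rintro ⟨f, hf, hadj⟩
    refine ⟨List.ofFn f, List.length_ofFn, List.isChain_ofFn.2 fun i hi => hadj _ _ ?_,
      List.nodup_ofFn.2 hf⟩
    simp [pathGraph_adj]
  · rintro ⟨l, rfl, hl, hnd⟩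
    refine ⟨fun i => l[i], fun i j h => Fin.ext (hnd.getElem_inj_iff.1 h), fun i j hij => ?_⟩
    rcases pathGraph_adj.1 hij with h | h
    · simpa [← h] using hl.getElem i (h ▸ j.2)
    · simpa [← h] using (hl.getElem j (h ▸ i.2)).symm

/-- The `none` entries cut `l` into at most `#none + 1` runs of `some`s, and `κ` is constant on
each run. -/
theorem card_image_toFinset_reduceOption_le {α ι : Type*} [DecidableEq α] [DecidableEq ι]
    (κ : α → ι) :
    ∀ {l : List (Option α)}, l.IsChain (fun x y => ∀ a ∈ x, ∀ b ∈ y, κ a = κ b) →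
      #(l.reduceOption.toFinset.image κ) ≤ (l.filter Option.isNone).length + 1
  | [], _ => by simp
  | [some a], _ => by simp
  | none :: t, h => by
    simpa using (card_image_toFinset_reduceOption_le κ h.tail).trans (Nat.le_succ _)
  | some a :: some b :: t, h => by
    have hab : κ a = κ b := (List.isChain_cons_cons.1 h).1 a rfl b rfl
    simpa [hab] using card_image_toFinset_reduceOption_le κ h.tail
  | some a :: none :: t, h => by
    simpa using (card_insert_le _ _).trans
      (Nat.succ_le_succ (card_image_toFinset_reduceOption_le κ h.tail.tail))

lemma exists_finset_of_containsCopy_pathGraph_coneCone {β ι : Type*} [DecidableEq ι]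
    {H : SimpleGraph β} {κ : β → ι} (hκ : ∀ u v, H.Adj u v → κ u = κ v) {N : ℕ}
    (h : ContainsCopy (pathGraph N) (cone (cone H))) :
    ∃ S : Finset β, N ≤ #S + 2 ∧ #(S.image κ) ≤ 3 := by
  classical
  obtain ⟨l, rfl, hchain, hnodup⟩ := containsCopy_pathGraph_iff.1 h
  -- `Option.join` sends both apexes to `none`
  set l' := l.map Option.join
  have hchain' : l'.IsChain (fun x y => ∀ a ∈ x, ∀ b ∈ y, κ a = κ b) := by
    rw [List.isChain_map]
    refine hchain.imp fun x y hxy a ha b hb => hκ a b ?_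
    rw [Option.mem_def, Option.join_eq_some_iff] at ha hb
    simpa [ha, hb] using hxy
  have hnodup' : l'.reduceOption.Nodup := by
    simpa [l', List.reduceOption, List.filterMap_map] using hnodup.filterMap (f := Option.join)
      (fun x y a hx hy => by rw [Option.mem_def, Option.join_eq_some_iff] at hx hy; rw [hx, hy])
  have hapex : (l'.filter Option.isNone).length ≤ 2 := by
    have hsub : l.filter (Option.isNone ∘ Option.join) ⊆ [none, some none] := by
      intro x hx
      rcases x with _ | _ | x <;> simp_all
    simpa [l', List.filter_map] using ((hnodup.filter _).subperm hsub).length_le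
  refine ⟨l'.reduceOption.toFinset, ?_, ?_⟩
  · have hlen : l'.length = l.length := List.length_map _
    have := List.length_eq_reduceOption_length_add_filter_none (l := l')
    rw [List.toFinset_card_of_nodup hnodup']
    omega
  · have := card_image_toFinset_reduceOption_le κ hchain'
    omega

theorem Antitone.sum_le_sum_range_card {M : Type*} [AddCommMonoid M] [PartialOrder M]
    [IsOrderedAddMonoid M] {f : ℕ → M} (hf : Antitone f) (s : Finset ℕ) :
    ∑ i ∈ s, f i ≤ ∑ i ∈ range #s, f i := by
  induction s using Finset.induction_on_max with
  | empty => simp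
  | insert a s hlt ih =>
    have has : a ∉ s := fun h => (hlt a h).false
    have hcard : #s ≤ a := by simpa using card_le_card fun x hx => mem_range.2 (hlt x hx)
    rw [sum_insert has, card_insert_of_notMem has, sum_range_succ, add_comm]
    exact add_le_add ih (hf hcard)

def pathsUnionPrefix (c k : ℕ) : List (ℕ × ℕ) := (List.range k).map (c, ·)

@[simp] lemma length_pathsUnionPrefix (c k : ℕ) : (pathsUnionPrefix c k).length = k := by
  simp [pathsUnionPrefix]

@[simp] lemma mem_pathsUnionPrefix {c k : ℕ} {v : ℕ × ℕ} :
    v ∈ pathsUnionPrefix c k ↔ v.1 = c ∧ v.2 < k := by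
  obtain ⟨x, y⟩ := v
  simp [pathsUnionPrefix, eq_comm, and_comm]

lemma nodup_pathsUnionPrefix (c k : ℕ) : (pathsUnionPrefix c k).Nodup :=
  List.nodup_range.map (Prod.mk_right_injective c)

/-- The vertices `(c, p)` with `p ≥ n c` are isolated in `pathsUnion n`: each is a block of its own. -/
def pathsUnionBlock (n : ℕ → ℕ) (v : ℕ × ℕ) : ℕ ⊕ (ℕ × ℕ) :=
  if v.2 < n v.1 then .inl v.1 else .inr v

section PathsUnion
variable {n : ℕ → ℕ}

lemma pathsUnion_adj_succ {c p : ℕ} (h : p + 1 < n c) : (pathsUnion n).Adj (c, p) (c, p + 1) := by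
  simp [pathsUnion, h]

lemma isChain_pathsUnionPrefix {c k : ℕ} (hk : k ≤ n c) :
    (pathsUnionPrefix c k).IsChain (pathsUnion n).Adj := by
  rw [pathsUnionPrefix, List.isChain_map, List.isChain_range]
  exact fun p hp => pathsUnion_adj_succ (by omega)

lemma containsCopy_pathGraph_coneCone_pathsUnion {a b c : ℕ} (ha : a ≤ n 0) (hb : b ≤ n 1)
    (hc : c ≤ n 2) : ContainsCopy (pathGraph (a + b + c + 2)) (cone (cone (pathsUnion n))) := by
  set inner := (pathsUnionPrefix 1 b).map some ++ none :: (pathsUnionPrefix 2 c).map some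
  refine containsCopy_pathGraph_iff.2
    ⟨((pathsUnionPrefix 0 a).map some).map some ++ none :: inner.map some, by simp [inner]; ring,
      ?_, ?_⟩
  · exact isChain_cone_append (isChain_cone_map_some (isChain_pathsUnionPrefix ha))
      (isChain_cone_append (isChain_pathsUnionPrefix hb) (isChain_pathsUnionPrefix hc))
  · apply nodup_cone_append
    simp [inner, List.nodup_append, List.nodup_map_iff (Option.some_injective _),
      nodup_pathsUnionPrefix]
    grind

lemma pathsUnionBlock_eq_of_adj {u v : ℕ × ℕ} (h : (pathsUnion n).Adj u v) :
    pathsUnionBlock n u = pathsUnionBlock n v := by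
  obtain ⟨-, ⟨h₁, h₂, h₃⟩ | ⟨h₁, h₂, h₃⟩⟩ := h
  all_goals rw [pathsUnionBlock, pathsUnionBlock, ← h₁, if_pos (by omega), if_pos (by omega)]

lemma card_filter_pathsUnionBlock_eq_le (S : Finset (ℕ × ℕ)) (k : ℕ ⊕ (ℕ × ℕ)) :
    #{v ∈ S | pathsUnionBlock n v = k} ≤ Sum.elim n 1 k := by
  rcases k with c | w
  · calc #{v ∈ S | pathsUnionBlock n v = .inl c} ≤ #({c} ×ˢ range (n c)) := by
          refine card_le_card fun v hv => ?_
          have hv := (mem_filter.1 hv).2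
          unfold pathsUnionBlock at hv
          split_ifs at hv with h
          obtain rfl := Sum.inl_injective hv
          exact mem_product.2 ⟨mem_singleton_self _, mem_range.2 h⟩
      _ = n c := by simp
  · refine (card_le_card fun v hv => ?_).trans (card_singleton w).le
    have hv := (mem_filter.1 hv).2
    unfold pathsUnionBlock at hv
    split_ifs at hv
    exact mem_singleton.2 (Sum.inr_injective hv)

lemma card_le_of_card_image_pathsUnionBlock_le_three (hn : Antitone n) (h1 : 1 ≤ n 2)
    {S : Finset (ℕ × ℕ)} (hS : #(S.image (pathsUnionBlock n)) ≤ 3) : #S ≤ n 0 + n 1 + n 2 := by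
  set K := S.image (pathsUnionBlock n)
  calc #S = ∑ k ∈ K, #{v ∈ S | pathsUnionBlock n v = k} := card_eq_sum_card_image _ _
    _ ≤ ∑ k ∈ K, Sum.elim n 1 k := sum_le_sum fun k _ => card_filter_pathsUnionBlock_eq_le S k
    _ = ∑ c ∈ K.toLeft, n c + #K.toRight := by
      rw [← toLeft_disjSum_toRight (u := K), sum_disjSum]
      simp
    _ ≤ ∑ c ∈ range #K.toLeft, n c + #K.toRight :=
      add_le_add_left (hn.sum_le_sum_range_card _) _
    _ ≤ n 0 + n 1 + n 2 := by
      have hK := card_toLeft_add_card_toRight (u := K)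
      have hK3 : #K.toLeft ≤ 3 := by omega
      have h21 : n 2 ≤ n 1 := hn (by norm_num)
      have h10 : n 1 ≤ n 0 := hn (by norm_num)
      interval_cases #K.toLeft <;> simp only [sum_range_succ, sum_range_zero] <;> omega

end PathsUnion

theorem K2_join_longest_path (n : ℕ → ℕ) (hmono : Antitone n) (h3 : 1 ≤ n 2) :
    ContainsCopy (pathGraph (n 0 + n 1 + n 2 + 2)) (cone (cone (pathsUnion n))) ∧
    ¬ ContainsCopy (pathGraph (n 0 + n 1 + n 2 + 3)) (cone (cone (pathsUnion n))) ∧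
    ∀ i, 3 ≤ i → i ≤ n 0 + n 1 + n 2 + 2 →
      ContainsCopy (pathGraph i)
        (cone (cone (pathsUnion (fun j => if j < 3 then n j else 0)))) := by
  refine ⟨containsCopy_pathGraph_coneCone_pathsUnion le_rfl le_rfl le_rfl, fun h => ?_,
    fun i hi3 hi => ?_⟩
  · obtain ⟨S, hN, hS⟩ := exists_finset_of_containsCopy_pathGraph_coneCone
      (fun _ _ => pathsUnionBlock_eq_of_adj) h
    have := card_le_of_card_image_pathsUnionBlock_le_three hmono h3 hS
    omega
  · obtain ⟨a, b, c, ha, hb, hc, rfl⟩ :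
        ∃ a b c, a ≤ n 0 ∧ b ≤ n 1 ∧ c ≤ n 2 ∧ i = a + b + c + 2 :=
      ⟨min (i - 2) (n 0), min (i - 2 - n 0) (n 1), i - 2 - n 0 - n 1,
        by omega, by omega, by omega, by omega⟩
    exact containsCopy_pathGraph_coneCone_pathsUnion (by simpa using ha) (by simpa using hb)
      (by simpa using hc)
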